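/- Let h > 0. The map α ↦ β := α/(1 - hα/2) is a well-defined bijection from the set A = {α ∈ ℂ : hα ≠ 2 and hα ≠ -2} onto the set B = {β ∈ ℂ : hβ ≠ -1 and hβ ≠ -2}, with inverse map β ↦ α := β/(1 + hβ/2); moreover, for corresponding α ∈ A and β ∈ B one has the identity 1 + hβ = (1 + hα/2)/(1 - hα/2), and consequently (1/h)·Log(1 + hβ) = ζ_h(α). -/

import Mathlib

/-! The map is a Möbius transformation: writing `β = α / (1 - hα/2)` one computes
`1 + hβ/2 = (1 - hα/2)⁻¹`, and symmetrically `1 - hα/2 = (1 + hβ/2)⁻¹` for `α = β / (1 + hβ/2)`;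
these two identities give both inverse laws, and `1 + hβ = (1 + hα/2)/(1 - hα/2)` makes the
logarithms agree. -/

section CayleyHilger

variable {K : Type*} [Field K] [CharZero K] (c : K) {a b : K}

def hilgerOfCayley (a : K) : K := a / (1 - c * a / 2)

def cayleyOfHilger (b : K) : K := b / (1 + c * b / 2)

lemma one_sub_mul_div_two_ne_zero (ha : c * a ≠ 2) : 1 - c * a / 2 ≠ 0 := fun H =>
  ha (by linear_combination -2 * H)

lemma one_add_mul_div_two_ne_zero (hb : c * b ≠ -2) : 1 + c * b / 2 ≠ 0 := fun H =>
  hb (by linear_combination 2 * H)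

lemma one_add_mul_hilgerOfCayley_div_two (ha : c * a ≠ 2) :
    1 + c * hilgerOfCayley c a / 2 = (1 - c * a / 2)⁻¹ := by
  have := one_sub_mul_div_two_ne_zero c ha
  unfold hilgerOfCayley
  field_simp
  ring

lemma one_sub_mul_cayleyOfHilger_div_two (hb : c * b ≠ -2) :
    1 - c * cayleyOfHilger c b / 2 = (1 + c * b / 2)⁻¹ := by
  have h2 : 2 + c * b ≠ 0 := fun H => hb (by linear_combination H)
  unfold cayleyOfHilger
  field_simp
  ring

lemma cayleyOfHilger_hilgerOfCayley (ha : c * a ≠ 2) :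
    cayleyOfHilger c (hilgerOfCayley c a) = a := by
  rw [cayleyOfHilger, one_add_mul_hilgerOfCayley_div_two c ha, hilgerOfCayley, div_inv_eq_mul,
    div_mul_cancel₀ _ (one_sub_mul_div_two_ne_zero c ha)]

lemma hilgerOfCayley_cayleyOfHilger (hb : c * b ≠ -2) :
    hilgerOfCayley c (cayleyOfHilger c b) = b := by
  rw [hilgerOfCayley, one_sub_mul_cayleyOfHilger_div_two c hb, cayleyOfHilger, div_inv_eq_mul,
    div_mul_cancel₀ _ (one_add_mul_div_two_ne_zero c hb)]

lemma one_add_mul_hilgerOfCayley (ha : c * a ≠ 2) :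
    1 + c * hilgerOfCayley c a = (1 + c * a / 2) / (1 - c * a / 2) := by
  have := one_sub_mul_div_two_ne_zero c ha
  unfold hilgerOfCayley
  field_simp
  ring

lemma mul_hilgerOfCayley_ne_neg_one (ha : c * a ≠ 2) (ha' : c * a ≠ -2) :
    c * hilgerOfCayley c a ≠ -1 := by
  intro H
  have h0 : (1 + c * a / 2) / (1 - c * a / 2) = 0 := by
    rw [← one_add_mul_hilgerOfCayley c ha, H, add_neg_cancel]
  exact one_add_mul_div_two_ne_zero c ha' <|
    (div_eq_zero_iff.mp h0).resolve_right (one_sub_mul_div_two_ne_zero c ha)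

lemma mul_hilgerOfCayley_ne_neg_two (ha : c * a ≠ 2) : c * hilgerOfCayley c a ≠ -2 := by
  intro H
  have h0 := one_add_mul_hilgerOfCayley_div_two c ha
  rw [H, neg_div, div_self two_ne_zero, add_neg_cancel] at h0
  exact inv_ne_zero (one_sub_mul_div_two_ne_zero c ha) h0.symm

lemma mul_cayleyOfHilger_ne_two (hb : c * b ≠ -2) : c * cayleyOfHilger c b ≠ 2 := by
  intro H
  have h0 := one_sub_mul_cayleyOfHilger_div_two c hb
  rw [H, div_self two_ne_zero, sub_self] at h0
  exact inv_ne_zero (one_add_mul_div_two_ne_zero c hb) h0.symm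

lemma mul_cayleyOfHilger_ne_neg_two (hb : c * b ≠ -1) (hb' : c * b ≠ -2) :
    c * cayleyOfHilger c b ≠ -2 := by
  intro H
  have h0 := one_sub_mul_cayleyOfHilger_div_two c hb'
  rw [H, ← mul_eq_one_iff_eq_inv₀ (one_add_mul_div_two_ne_zero c hb')] at h0
  exact hb (by linear_combination h0)

end CayleyHilger

theorem stmt0 (h : ℝ) :
    (∀ α : ℂ, (h : ℂ) * α ≠ 2 → (h : ℂ) * α ≠ -2 →
      ((h : ℂ) * (α / (1 - (h : ℂ) * α / 2)) ≠ -1 ∧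
       (h : ℂ) * (α / (1 - (h : ℂ) * α / 2)) ≠ -2) ∧
      (α / (1 - (h : ℂ) * α / 2)) / (1 + (h : ℂ) * (α / (1 - (h : ℂ) * α / 2)) / 2) = α ∧
      1 + (h : ℂ) * (α / (1 - (h : ℂ) * α / 2))
        = (1 + (h : ℂ) * α / 2) / (1 - (h : ℂ) * α / 2) ∧
      (1 / (h : ℂ)) * Complex.log (1 + (h : ℂ) * (α / (1 - (h : ℂ) * α / 2)))
        = (1 / (h : ℂ)) * Complex.log ((1 + (h : ℂ) * α / 2) / (1 - (h : ℂ) * α / 2))) ∧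
    (∀ β : ℂ, (h : ℂ) * β ≠ -1 → (h : ℂ) * β ≠ -2 →
      ((h : ℂ) * (β / (1 + (h : ℂ) * β / 2)) ≠ 2 ∧
       (h : ℂ) * (β / (1 + (h : ℂ) * β / 2)) ≠ -2) ∧
      (β / (1 + (h : ℂ) * β / 2)) / (1 - (h : ℂ) * (β / (1 + (h : ℂ) * β / 2)) / 2) = β) := by
  refine ⟨fun α hα hα' => ?_, fun β hβ hβ' => ?_⟩
  · have hcayley := one_add_mul_hilgerOfCayley (h : ℂ) hα
    exact ⟨⟨mul_hilgerOfCayley_ne_neg_one _ hα hα', mul_hilgerOfCayley_ne_neg_two _ hα⟩,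
      cayleyOfHilger_hilgerOfCayley _ hα, hcayley, congrArg (_ * Complex.log ·) hcayley⟩
  · exact ⟨⟨mul_cayleyOfHilger_ne_two _ hβ', mul_cayleyOfHilger_ne_neg_two _ hβ hβ'⟩,
      hilgerOfCayley_cayleyOfHilger _ hβ'⟩
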